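/- Let P_{YZ|X} be a wiretap channel from finite X to finite Y × Z, and consider any (M,ε,δ) partition code (C, π, P_{X|W}) with |C| = N. Let P_{XY} and P_{XZ} be the joints induced by the code (P_{XY}(x,y) := P_X(x)·P_{Y|X}(y|x) and P_{XZ}(x,z) := P_X(x)·P_{Z|X}(z|x), where P_X(x) := (1/M)·Σ_{m=1}^M P_{X|W}(x|m)), let P_Z be the Z-marginal of P_{XZ}, and let P^unif_X be the uniform distribution on C. Then for every PMF Q_Y on Y and every real τ with 0 < τ < 1 − δ: M · τ · β_{1−ε}(P_{XY}, P^unif_X × Q_Y) ≤ β_{δ+τ}(P_{XZ}, P^unif_X × P_Z). -/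

import Mathlib

/-! The decoder, read as the test `x = g(y)`, has power at least `1 - ε` under `P_{XY}` and size
exactly `1/N` under `P^unif_X × Q_Y`, so `β_{1-ε} ≤ 1/N`. Conversely, a test `t` on `X × Z` of
power `δ + τ` under `P_{XZ}` induces the test `min(1, ∑_{x ∈ π⁻¹(m)} t(x,z))` on `W × Z`, whose
power under `P_{WZ}` is at least that of `t`, because each encoder distribution lives on one fibre
of `π`. The secrecy condition moves this power to `P_W × P_Z` at a cost of at most `δ`, and summing
over the fibres of `π` gives `M τ / N ≤ ∑ (P^unif_X × P_Z) t`. -/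

open scoped Classical
open Finset

noncomputable section

/-- `P` is a probability mass function on the finite type `A`. -/
def IsPMF {A : Type*} [Fintype A] (P : A → ℝ) : Prop :=
  (∀ a, 0 ≤ P a) ∧ ∑ a, P a = 1

/-- Total variation distance `d(P,Q) = (1/2) ∑ |P a - Q a|`. -/
def dTV {A : Type*} [Fintype A] (P Q : A → ℝ) : ℝ :=
  (1 / 2) * ∑ a, |P a - Q a|

/-- Optimal performance of a binary hypothesis test between `P` and `Q`:
`β_α(P,Q) = min { ∑ Q a * t a : t : A → [0,1], ∑ P a * t a ≥ α }`. -/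
def betaHT {A : Type*} [Fintype A] (α : ℝ) (P Q : A → ℝ) : ℝ :=
  sInf {b : ℝ | ∃ t : A → ℝ, (∀ a, 0 ≤ t a ∧ t a ≤ 1) ∧
    α ≤ ∑ a, P a * t a ∧ b = ∑ a, Q a * t a}

section Pmf

variable {A B : Type*} [Fintype A] [Fintype B]

theorem IsPMF.joint {P : A → ℝ} {K : A → B → ℝ} (hP : IsPMF P) (hK : ∀ a, IsPMF (K a)) :
    IsPMF (fun p : A × B => P p.1 * K p.1 p.2) := by
  refine ⟨fun p => mul_nonneg (hP.1 p.1) ((hK p.1).1 p.2), ?_⟩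
  simp only [Fintype.sum_prod_type, ← Finset.mul_sum, (hK _).2, mul_one, hP.2]

theorem IsPMF.marginal_snd {J : A × B → ℝ} (hJ : IsPMF J) : IsPMF (fun b => ∑ a, J (a, b)) :=
  ⟨fun b => Finset.sum_nonneg fun a _ => hJ.1 (a, b),
    by rw [Finset.sum_comm, ← Fintype.sum_prod_type, hJ.2]⟩

theorem isPMF_uniform_fin {M : ℕ} (hM : 0 < M) : IsPMF (fun _ : Fin M => (M : ℝ)⁻¹) :=
  ⟨fun _ => by positivity, by simp [hM.ne']⟩

end Pmf

section HypothesisTesting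

variable {A : Type*} [Fintype A]

theorem betaHT_le_sum_mul {α : ℝ} {P Q t : A → ℝ} (hQ : ∀ a, 0 ≤ Q a)
    (ht : ∀ a, 0 ≤ t a ∧ t a ≤ 1) (hα : α ≤ ∑ a, P a * t a) :
    betaHT α P Q ≤ ∑ a, Q a * t a := by
  refine csInf_le ⟨0, ?_⟩ ⟨t, ht, hα, rfl⟩
  rintro _ ⟨s, hs, -, rfl⟩
  exact Finset.sum_nonneg fun a _ => mul_nonneg (hQ a) (hs a).1

theorem le_betaHT {α c : ℝ} {P Q : A → ℝ} (hα : α ≤ ∑ a, P a)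
    (h : ∀ t : A → ℝ, (∀ a, 0 ≤ t a ∧ t a ≤ 1) → α ≤ ∑ a, P a * t a → c ≤ ∑ a, Q a * t a) :
    c ≤ betaHT α P Q := by
  refine le_csInf ⟨_, fun _ => 1, fun _ => ⟨zero_le_one, le_rfl⟩, by simpa using hα, rfl⟩ ?_
  rintro _ ⟨t, ht, hPt, rfl⟩
  exact h t ht hPt

theorem sum_mul_le_dTV_add {P Q t : A → ℝ} (hPQ : ∑ a, P a = ∑ a, Q a)
    (ht : ∀ a, 0 ≤ t a ∧ t a ≤ 1) :
    ∑ a, P a * t a ≤ dTV P Q + ∑ a, Q a * t a := by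
  have hpos : ∀ a, (P a - Q a) * t a ≤ (|P a - Q a| + (P a - Q a)) / 2 := fun a => by
    cases abs_cases (P a - Q a) <;> nlinarith [ht a]
  have := Finset.sum_le_sum fun a (_ : a ∈ Finset.univ) => hpos a
  rw [← Finset.sum_div, Finset.sum_add_distrib, Finset.sum_sub_distrib, hPQ, sub_self] at this
  simp only [sub_mul, Finset.sum_sub_distrib] at this
  rw [dTV]
  linarith

theorem sum_mul_le_sum_mul_min_one {K t : A → ℝ} {S : Finset A} (hK : ∀ a, 0 ≤ K a)
    (hKS : ∀ a ∉ S, K a = 0) (ht : ∀ a, 0 ≤ t a ∧ t a ≤ 1) :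
    ∑ a, K a * t a ≤ (∑ a, K a) * min 1 (∑ a ∈ S, t a) := by
  rw [mul_min_of_nonneg _ _ (Finset.sum_nonneg fun a _ => hK a), mul_one]
  refine le_min (Finset.sum_le_sum fun a _ => mul_le_of_le_one_right (hK a) (ht a).2) ?_
  rw [← Finset.sum_subset (Finset.subset_univ S) fun a _ ha => by rw [hKS a ha, zero_mul],
    Finset.mul_sum]
  exact Finset.sum_le_sum fun a _ => mul_le_mul_of_nonneg_right
    (Finset.single_le_sum (fun b _ => hK b) (Finset.mem_univ a)) (ht a).1

end HypothesisTesting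

def uniformOn {X : Type*} (C : Finset X) (x : X) : ℝ := if x ∈ C then (C.card : ℝ)⁻¹ else 0

theorem uniformOn_nonneg {X : Type*} (C : Finset X) (x : X) : 0 ≤ uniformOn C x := by
  unfold uniformOn; split_ifs <;> positivity

theorem card_mul_sum_uniformOn_mul {X B : Type*} [Fintype X] [Fintype B] (C : Finset X)
    (Q : B → ℝ) (t : X × B → ℝ) :
    (C.card : ℝ) * ∑ p : X × B, uniformOn C p.1 * Q p.2 * t p = ∑ b, Q b * ∑ x ∈ C, t (x, b) := by
  rcases C.eq_empty_or_nonempty with rfl | hC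
  · simp
  rw [Fintype.sum_prod_type, Finset.sum_comm, Finset.mul_sum]
  refine Finset.sum_congr rfl fun b _ => ?_
  rw [← Finset.sum_subset (Finset.subset_univ C) fun x _ hx => by simp [uniformOn, hx],
    Finset.mul_sum, Finset.mul_sum]
  refine Finset.sum_congr rfl fun x hx => ?_
  have : (C.card : ℝ) ≠ 0 := by exact_mod_cast hC.card_pos.ne'
  simp only [uniformOn, hx, if_true]
  field_simp

section Decoder

variable {X Y Z : Type*} [Fintype X] [Fintype Y] [Fintype Z]

theorem betaHT_uniformOn_prod_le_inv_card {α : ℝ} {P : X × Y → ℝ} {Q : Y → ℝ} {C : Finset X}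
    {g : Y → X} (hg : ∀ y, g y ∈ C) (hQ : IsPMF Q)
    (hα : α ≤ ∑ p, P p * if g p.2 = p.1 then 1 else 0) :
    betaHT α P (fun p => uniformOn C p.1 * Q p.2) ≤ (C.card : ℝ)⁻¹ := by
  have hval : (C.card : ℝ) *
      ∑ p : X × Y, uniformOn C p.1 * Q p.2 * (if g p.2 = p.1 then 1 else 0) = 1 := by
    rw [card_mul_sum_uniformOn_mul]
    simp only [Finset.sum_ite_eq, hg, if_true, mul_one, hQ.2]
  refine (betaHT_le_sum_mul (fun p => ?_) (fun p => ?_) hα).trans_eq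
    (eq_inv_of_mul_eq_one_right hval)
  · exact mul_nonneg (uniformOn_nonneg C p.1) (hQ.1 p.2)
  · split_ifs <;> norm_num

theorem one_sub_le_sum_success {PX : X → ℝ} (hPX : IsPMF PX) {W : X → Y × Z → ℝ}
    (hW : ∀ x, IsPMF (W x)) {g : Y → X} {ε : ℝ}
    (herr : ∑ x, ∑ p : Y × Z, PX x * W x p * (if g p.1 = x then 0 else 1) ≤ ε) :
    1 - ε ≤ ∑ q : X × Y, PX q.1 * (∑ z, W q.1 (q.2, z)) * if g q.2 = q.1 then 1 else 0 := by
  have htotal := (hPX.joint hW).2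
  have hsucc : ∑ q : X × Y, PX q.1 * (∑ z, W q.1 (q.2, z)) * (if g q.2 = q.1 then 1 else 0) =
      ∑ x, ∑ p : Y × Z, PX x * W x p * if g p.1 = x then 1 else 0 := by
    simp only [Fintype.sum_prod_type, Finset.mul_sum, Finset.sum_mul]
  have hsplit : ∑ x, ∑ p : Y × Z, PX x * W x p =
      ∑ x, ∑ p : Y × Z, (PX x * W x p * (if g p.1 = x then 1 else 0) +
        PX x * W x p * if g p.1 = x then 0 else 1) := by
    refine Finset.sum_congr rfl fun x _ => Finset.sum_congr rfl fun p _ => ?_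
    split_ifs <;> ring
  rw [Fintype.sum_prod_type] at htotal
  simp only [Finset.sum_add_distrib] at hsplit
  linarith

end Decoder

section Secrecy

variable {X Z : Type*} [Fintype X] [Fintype Z] {M : ℕ}

theorem sum_joint_mul_le_dTV_add (hM : 0 < M) {enc : Fin M → X → ℝ} (henc : ∀ m, IsPMF (enc m))
    {V : X → Z → ℝ} (hV : ∀ x, IsPMF (V x)) {PZ : Z → ℝ} (hPZ : IsPMF PZ) {C : Finset X}
    {π : X → Fin M} (hsupp : ∀ m x, enc m x ≠ 0 → x ∈ C ∧ π x = m) {t : X × Z → ℝ}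
    (ht : ∀ p, 0 ≤ t p ∧ t p ≤ 1) :
    ∑ p : X × Z, (M : ℝ)⁻¹ * (∑ m, enc m p.1) * V p.1 p.2 * t p ≤
      dTV (fun q : Fin M × Z => (M : ℝ)⁻¹ * ∑ x, enc q.1 x * V x q.2)
          (fun q => (M : ℝ)⁻¹ * PZ q.2) +
        (M : ℝ)⁻¹ * (C.card * ∑ p : X × Z, uniformOn C p.1 * PZ p.2 * t p) := by
  set s : Fin M × Z → ℝ := fun q => min 1 (∑ x ∈ C with π x = q.1, t (x, q.2))
  have hs : ∀ q, 0 ≤ s q ∧ s q ≤ 1 := fun q =>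
    ⟨le_min zero_le_one (Finset.sum_nonneg fun x _ => (ht _).1), min_le_left _ _⟩
  have hU := isPMF_uniform_fin hM
  have hsum : ∑ q : Fin M × Z, (M : ℝ)⁻¹ * ∑ x, enc q.1 x * V x q.2 =
      ∑ q : Fin M × Z, (M : ℝ)⁻¹ * PZ q.2 := by
    rw [(hU.joint fun m => ((henc m).joint hV).marginal_snd).2, (hU.joint fun _ => hPZ).2]
  calc ∑ p : X × Z, (M : ℝ)⁻¹ * (∑ m, enc m p.1) * V p.1 p.2 * t p
      = ∑ q : Fin M × Z, (M : ℝ)⁻¹ * ∑ x, enc q.1 x * V x q.2 * t (x, q.2) := by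
        simp only [Fintype.sum_prod_type, Finset.mul_sum, Finset.sum_mul, mul_assoc]
        rw [Finset.sum_comm_cycle]
        exact Finset.sum_congr rfl fun m _ => Finset.sum_comm
    _ ≤ ∑ q : Fin M × Z, (M : ℝ)⁻¹ * ((∑ x, enc q.1 x * V x q.2) * s q) := by
        gcongr with q
        refine sum_mul_le_sum_mul_min_one (fun x => mul_nonneg ((henc q.1).1 x) ((hV x).1 q.2))
          (fun x hx => ?_) fun x => ht (x, q.2)
        by_contra h
        exact hx (Finset.mem_filter.2 (hsupp q.1 x (left_ne_zero_of_mul h)))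
    _ ≤ dTV _ _ + ∑ q : Fin M × Z, (M : ℝ)⁻¹ * PZ q.2 * s q := by
        simpa only [mul_assoc] using sum_mul_le_dTV_add hsum hs
    _ ≤ dTV _ _ + (M : ℝ)⁻¹ * ∑ z, PZ z * ∑ x ∈ C, t (x, z) := by
        gcongr
        rw [Fintype.sum_prod_type, Finset.sum_comm, Finset.mul_sum]
        gcongr with z
        rw [← Finset.sum_fiberwise C π, Finset.mul_sum, Finset.mul_sum]
        refine Finset.sum_le_sum fun m _ => ?_
        rw [mul_assoc]
        gcongr
        · exact hPZ.1 z
        · exact min_le_right _ _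
    _ = _ := by rw [card_mul_sum_uniformOn_mul]

end Secrecy

theorem stmt6_general {X Y Z : Type*} [Fintype X] [Fintype Y] [Fintype Z]
    (Wch : X → Y × Z → ℝ) (hW : ∀ x, IsPMF (Wch x))
    (M : ℕ) (hM : 0 < M)
    (ε δ : ℝ)
    (C : Finset X) (N : ℕ) (hN : C.card = N)
    (gle : Y → X) (hgle : ∀ y, gle y ∈ C)
    (π : X → Fin M)
    (enc : Fin M → X → ℝ) (henc : ∀ m, IsPMF (enc m))
    (hsupp : ∀ m x, enc m x ≠ 0 → x ∈ C ∧ π x = m)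
    (PX : X → ℝ) (hPXdef : ∀ x, PX x = ((M : ℝ))⁻¹ * ∑ m, enc m x)
    (PXY : X × Y → ℝ) (hPXY : ∀ p, PXY p = PX p.1 * ∑ z, Wch p.1 (p.2, z))
    (PXZ : X × Z → ℝ) (hPXZ : ∀ p, PXZ p = PX p.1 * ∑ y, Wch p.1 (y, p.2))
    (PZ : Z → ℝ) (hPZ : ∀ z, PZ z = ∑ x, PXZ (x, z))
    (Punif : X → ℝ) (hPunif : ∀ x, Punif x = if x ∈ C then ((N : ℝ))⁻¹ else 0)
    (hrel : ∑ x, ∑ p : Y × Z, PX x * Wch x p * (if gle p.1 = x then 0 else 1) ≤ ε)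
    (hsec : dTV (fun p : Fin M × Z => ((M : ℝ))⁻¹ * ∑ x, enc p.1 x * ∑ y, Wch x (y, p.2))
              (fun p : Fin M × Z => ((M : ℝ))⁻¹ * PZ p.2) ≤ δ) :
    ∀ QY : Y → ℝ, IsPMF QY → ∀ τ : ℝ, 0 < τ → τ < 1 - δ →
      (M : ℝ) * τ * betaHT (1 - ε) PXY (fun p : X × Y => Punif p.1 * QY p.2)
        ≤ betaHT (δ + τ) PXZ (fun p : X × Z => Punif p.1 * PZ p.2) := by
  intro QY hQY τ hτ hτδ
  obtain rfl : PX = fun x => (M : ℝ)⁻¹ * ∑ m, enc m x := funext hPXdef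
  obtain rfl : PXY = _ := funext hPXY
  obtain rfl : PXZ = _ := funext hPXZ
  obtain rfl : PZ = _ := funext hPZ
  obtain rfl : Punif = uniformOn C := funext fun x => by rw [hPunif, uniformOn, hN]
  have hPX : IsPMF fun x => (M : ℝ)⁻¹ * ∑ m, enc m x := by
    simpa only [Finset.mul_sum] using ((isPMF_uniform_fin hM).joint henc).marginal_snd
  have hV : ∀ x, IsPMF fun z => ∑ y, Wch x (y, z) := fun x => (hW x).marginal_snd
  have hPXZ := hPX.joint hV
  obtain ⟨x, -, hx⟩ := Finset.exists_ne_zero_of_sum_ne_zero (s := univ) (f := enc ⟨0, hM⟩)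
    (by rw [(henc _).2]; exact one_ne_zero)
  have hC : 0 < (C.card : ℝ) := by exact_mod_cast Finset.card_pos.2 ⟨x, (hsupp _ x hx).1⟩
  have hβY := betaHT_uniformOn_prod_le_inv_card hgle hQY (one_sub_le_sum_success hPX hW hrel)
  refine (mul_le_mul_of_nonneg_left hβY (by positivity)).trans
    (le_betaHT (by rw [hPXZ.2]; linarith) fun t ht hδτ => ?_)
  have hsplit := sum_joint_mul_le_dTV_add hM henc hV hPXZ.marginal_snd hsupp ht
  rw [← div_eq_mul_inv, div_le_iff₀ hC, mul_comm _ (C.card : ℝ),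
    ← le_inv_mul_iff₀ (by positivity)]
  linarith

/-- Converse bound for partition codes (Theorem 4, Eq. (25)): every `(M,ε,δ)`
partition code with codebook `C` of size `N` satisfies
`M τ β_{1-ε}(P_{XY}, P_X^unif Q_Y) ≤ β_{δ+τ}(P_{XZ}, P_X^unif P_Z)`. -/
theorem stmt6 {X Y Z : Type*} [Fintype X] [Fintype Y] [Fintype Z]
    [Nonempty X] [Nonempty Y] [Nonempty Z]
    (Wch : X → Y × Z → ℝ) (hW : ∀ x, IsPMF (Wch x))
    (M : ℕ) (hM : 0 < M)
    (ε δ : ℝ) (hε0 : 0 ≤ ε) (hε1 : ε ≤ 1) (hδ0 : 0 ≤ δ) (hδ1 : δ ≤ 1)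
    (C : Finset X) (N : ℕ) (hN : C.card = N)
    (gle : Y → X) (hgle : ∀ y, gle y ∈ C)
    (π : X → Fin M) (hπ : ∀ m : Fin M, ∃ x ∈ C, π x = m)
    (enc : Fin M → X → ℝ) (henc : ∀ m, IsPMF (enc m))
    (hsupp : ∀ m x, enc m x ≠ 0 → x ∈ C ∧ π x = m)
    (PX : X → ℝ) (hPXdef : ∀ x, PX x = ((M : ℝ))⁻¹ * ∑ m, enc m x)
    (PXY : X × Y → ℝ) (hPXY : ∀ p, PXY p = PX p.1 * ∑ z, Wch p.1 (p.2, z))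
    (PXZ : X × Z → ℝ) (hPXZ : ∀ p, PXZ p = PX p.1 * ∑ y, Wch p.1 (y, p.2))
    (PZ : Z → ℝ) (hPZ : ∀ z, PZ z = ∑ x, PXZ (x, z))
    (Punif : X → ℝ) (hPunif : ∀ x, Punif x = if x ∈ C then ((N : ℝ))⁻¹ else 0)
    (hrel : ∑ x, ∑ p : Y × Z, PX x * Wch x p * (if gle p.1 = x then 0 else 1) ≤ ε)
    (hsec : dTV (fun p : Fin M × Z => ((M : ℝ))⁻¹ * ∑ x, enc p.1 x * ∑ y, Wch x (y, p.2))
              (fun p : Fin M × Z => ((M : ℝ))⁻¹ * PZ p.2) ≤ δ) :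
    ∀ QY : Y → ℝ, IsPMF QY → ∀ τ : ℝ, 0 < τ → τ < 1 - δ →
      (M : ℝ) * τ * betaHT (1 - ε) PXY (fun p : X × Y => Punif p.1 * QY p.2)
        ≤ betaHT (δ + τ) PXZ (fun p : X × Z => Punif p.1 * PZ p.2) :=
  stmt6_general Wch hW M hM ε δ C N hN gle hgle π enc henc hsupp PX hPXdef PXY hPXY PXZ hPXZ PZ hPZ
    Punif hPunif hrel hsec
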